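/- Let $A$ be a C*-algebra with a faithful tracial state $\tau$, realized on its GNS Hilbert space $\mathfrak{H}$. Suppose $B \subseteq A$ is a C*-subalgebra, $u \in A$ a unitary of order $n$, such that the closed subspaces $u^k \overline{B\hat{1}}$, $0 \le k \le n-1$, are pairwise orthogonal and span $\mathfrak{H}$. Then every $a \in A$ can be written uniquely as $a = \sum_{k=0}^{n-1} u^k b_k$ with $b_k \in B$, i.e. $A = \bigoplus_{k=0}^{n-1} u^k B$ as a Banach space, provided the linear span of $\bigcup_k u^k B$ is dense in $A$. -/

import Mathlib

open scoped InnerProductSpace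

/-- A tracial state on a unital C*-algebra. -/
def IsTracialState {A : Type*} [CStarAlgebra A] (τ : A →L[ℂ] ℂ) : Prop :=
  τ 1 = 1 ∧ (∀ a : A, 0 ≤ (τ (star a * a)).re) ∧ (∀ a : A, (τ (star a * a)).im = 0) ∧
    ∀ x y : A, τ (x * y) = τ (y * x)

section CStarAux
variable {A : Type*} [CStarAlgebra A] [PartialOrder A] [StarOrderedRing A]

private lemma aux_tau_mono (τ : A →L[ℂ] ℂ) (hpos : ∀ a : A, 0 ≤ (τ (star a * a)).re)
    {y z : A} (h : y ≤ z) : (τ y).re ≤ (τ z).re := by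
  have hzy : 0 ≤ z - y := sub_nonneg.mpr h
  have hdd : CFC.sqrt (z - y) * CFC.sqrt (z - y) = z - y := CFC.sqrt_mul_sqrt_self _ hzy
  have hsd : star (CFC.sqrt (z - y)) = CFC.sqrt (z - y) :=
    (IsSelfAdjoint.of_nonneg (CFC.sqrt_nonneg _)).star_eq
  have h0 : 0 ≤ (τ (z - y)).re := by
    have : z - y = star (CFC.sqrt (z - y)) * CFC.sqrt (z - y) := by rw [hsd, hdd]
    rw [this]
    exact hpos _
  rw [map_sub, Complex.sub_re] at h0
  linarith

private lemma aux_smul_re (τ : A →L[ℂ] ℂ) (c : ℝ) (w : A) :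
    (τ (c • w)).re = c * (τ w).re := by
  rw [← Complex.coe_smul, map_smul, smul_eq_mul, Complex.re_ofReal_mul]

private lemma aux_norm_le (τ : A →L[ℂ] ℂ) (hpos : ∀ a : A, 0 ≤ (τ (star a * a)).re)
    (hfaith : ∀ a : A, (τ (star a * a)).re = 0 → a = 0)
    (x : A) (hx : 0 ≤ x) (C : ℝ) (hC : 0 ≤ C)
    (hineq : ∀ m : ℕ, 1 ≤ m → (τ (x ^ (2*m+1))).re ≤ C * (τ (x ^ (2*m))).re) :
    ‖x‖ ≤ C := by
  by_contra hcon
  push_neg at hcon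
  set r := ‖x‖ with hrdef
  have hr : 0 < r := lt_of_le_of_lt hC hcon
  haveI : Nontrivial A := nontrivial_of_ne x 0 (by
    intro h
    rw [hrdef, h, norm_zero] at hr
    exact lt_irrefl 0 hr)
  have hxsa : IsSelfAdjoint x := .of_nonneg hx
  set δ := Real.sqrt ((r*C + r*r)/2) with hδdef
  have hδsq : δ^2 = (r*C + r*r)/2 := Real.sq_sqrt (by positivity)
  have hδ2gt : r*C < δ^2 := by rw [hδsq]; nlinarith
  have hδ2lt : δ^2 < r^2 := by rw [hδsq]; nlinarith
  have hδ0 : 0 < δ := Real.sqrt_pos.mpr (by nlinarith)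
  have hδlt : δ < r := by nlinarith
  have hspec : ∀ t ∈ spectrum ℝ x, 0 ≤ t ∧ t ≤ r := by
    intro t ht
    refine ⟨spectrum_nonneg_of_nonneg hx ht, ?_⟩
    have h1 := spectrum.norm_le_norm_of_mem ht
    rw [Real.norm_eq_abs] at h1
    exact le_trans (le_abs_self t) h1
  set f : ℝ → ℝ := fun t => max (t - δ) 0 with hfdef
  have hfc : Continuous f := (continuous_id.sub continuous_const).max continuous_const
  set z := cfc f x with hzdef
  have hz0 : 0 ≤ z := cfc_nonneg fun t _ => le_max_right _ _
  -- ε > 0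
  have hε : 0 < (τ z).re := by
    rcases (by simpa using aux_tau_mono τ hpos hz0 : 0 ≤ (τ z).re).lt_or_eq with h | h
    · exact h
    · exfalso
      have hzz : z = 0 := by
        have hdd : CFC.sqrt z * CFC.sqrt z = z := CFC.sqrt_mul_sqrt_self _ hz0
        have hsd : star (CFC.sqrt z) = CFC.sqrt z :=
          (IsSelfAdjoint.of_nonneg (CFC.sqrt_nonneg _)).star_eq
        have h0 : CFC.sqrt z = 0 := by
          apply hfaith
          rw [hsd, hdd]
          exact h.symm
        rw [← hdd, h0, mul_zero]
      have hxle : x ≤ algebraMap ℝ A δ := by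
        calc x = cfc (fun t : ℝ => t) x := (cfc_id' ℝ x).symm
        _ ≤ cfc (fun t : ℝ => δ + f t) x := by
            refine cfc_mono (fun t ht => ?_) continuousOn_id
              ((continuous_const.add hfc).continuousOn)
            have h1 := le_max_left (t - δ) 0
            simp only [hfdef]
            linarith
        _ = cfc (fun _ : ℝ => δ) x + cfc f x := by
            exact cfc_add x _ _ continuousOn_const hfc.continuousOn
        _ = algebraMap ℝ A δ := by rw [cfc_const δ x, ← hzdef, hzz, add_zero]
      have h1 : r ≤ ‖algebraMap ℝ A δ‖ := CStarAlgebra.norm_le_norm_of_nonneg_of_le hx hxle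
      rw [norm_algebraMap', Real.norm_eq_abs, abs_of_pos hδ0] at h1
      linarith
  -- lower bound
  have hlow : ∀ m : ℕ, (δ^(2*m+1) / r) * (τ z).re ≤ (τ (x^(2*m+1))).re := by
    intro m
    have hcc : (δ^(2*m+1)/r) • z ≤ x^(2*m+1) := by
      have h1 : cfc (fun t : ℝ => (δ^(2*m+1)/r) * f t) x = (δ^(2*m+1)/r) • z :=
        cfc_const_mul _ f x hfc.continuousOn
      have h2 : cfc (fun t : ℝ => t^(2*m+1)) x = x^(2*m+1) := cfc_pow_id x _
      rw [← h1, ← h2]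
      refine cfc_mono (fun t ht => ?_) ((continuous_const.mul hfc).continuousOn)
        ((continuous_pow _).continuousOn)
      obtain ⟨ht0, htr⟩ := hspec t ht
      rcases le_or_gt t δ with h | h
      · have : f t = 0 := by simp only [hfdef]; simp [sub_nonpos.mpr h]
        rw [this, mul_zero]
        positivity
      · have hft : f t = t - δ := by simp only [hfdef]; simp [le_of_lt (sub_pos.mpr h)]
        rw [hft]
        have h1 : δ^(2*m+1) ≤ t^(2*m+1) := pow_le_pow_left₀ hδ0.le h.le _
        have h2 : t - δ ≤ r := by linarith
        calc δ^(2*m+1)/r * (t - δ) ≤ δ^(2*m+1)/r * r := by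
              apply mul_le_mul_of_nonneg_left h2 (by positivity)
        _ = δ^(2*m+1) := div_mul_cancel₀ _ hr.ne'
        _ ≤ t^(2*m+1) := h1
    have := aux_tau_mono τ hpos hcc
    rwa [aux_smul_re] at this
  -- upper bound
  have hup : ∀ m : ℕ, (τ (x^(m+1))).re ≤ r * (τ (x^m)).re := by
    intro m
    have hcc : x^(m+1) ≤ r • x^m := by
      have h1 : cfc (fun t : ℝ => r * t^m) x = r • x^m := by
        rw [cfc_const_mul _ _ x (by fun_prop), cfc_pow_id x _]
      have h2 : cfc (fun t : ℝ => t^(m+1)) x = x^(m+1) := cfc_pow_id x _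
      rw [← h1, ← h2]
      refine cfc_mono (fun t ht => ?_) ((continuous_pow _).continuousOn)
        ((continuous_const.mul (continuous_pow _)).continuousOn)
      obtain ⟨ht0, htr⟩ := hspec t ht
      calc t^(m+1) = t * t^m := by ring
      _ ≤ r * t^m := by apply mul_le_mul_of_nonneg_right htr (by positivity)
    have := aux_tau_mono τ hpos hcc
    rwa [aux_smul_re] at this
  -- the T sequence
  set T : ℕ → ℝ := fun m => (τ (x^m)).re with hTdef
  have hT2 : 0 ≤ T 2 := by
    have e : x^2 = star x * x := by rw [pow_two, hxsa.star_eq]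
    simp only [hTdef, e]
    exact hpos x
  have hTbound : ∀ j : ℕ, T (2*(j+1)) ≤ (r*C)^j * T 2 := by
    intro j
    induction j with
    | zero => simp [hTdef]
    | succ j ih =>
      have e1 : 2*(j+1+1) = (2*(j+1)+1)+1 := by ring
      have h1 : T (2*(j+1+1)) ≤ r * T (2*(j+1)+1) := by
        rw [e1]; exact hup _
      have h2 : T (2*(j+1)+1) ≤ C * T (2*(j+1)) := hineq (j+1) (by omega)
      calc T (2*(j+1+1)) ≤ r * (C * T (2*(j+1))) :=
            le_trans h1 (mul_le_mul_of_nonneg_left h2 hr.le)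
      _ ≤ r * (C * ((r*C)^j * T 2)) := by
            apply mul_le_mul_of_nonneg_left _ hr.le
            exact mul_le_mul_of_nonneg_left ih hC
      _ = (r*C)^(j+1) * T 2 := by ring
  set ε := (τ z).re with hεdef
  have key : ∀ j : ℕ, (δ^2)^(j+1) * (δ * ε / r) ≤ (r*C)^j * (C * T 2) := by
    intro j
    have h1 := hlow (j+1)
    have h2 := hineq (j+1) (by omega)
    have h3 := hTbound j
    calc (δ^2)^(j+1) * (δ * ε / r) = δ^(2*(j+1)+1)/r * ε := by
          rw [← pow_mul, pow_succ]; ring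
    _ ≤ T (2*(j+1)+1) := h1
    _ ≤ C * T (2*(j+1)) := h2
    _ ≤ C * ((r*C)^j * T 2) := mul_le_mul_of_nonneg_left h3 hC
    _ = (r*C)^j * (C * T 2) := by ring
  -- contradiction
  have hα : 0 < δ * ε / r := by positivity
  rcases eq_or_lt_of_le hC with hC0 | hC0
  · have hk0 := key 0
    rw [← hC0] at hk0
    simp at hk0
    have hδ2pos : 0 < δ^2 := by positivity
    nlinarith [mul_pos hδ2pos hα]
  · have hL : 0 < r * C := by positivity
    have hq : 1 < δ^2 / (r*C) := (one_lt_div hL).mpr hδ2gt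
    obtain ⟨j, hj⟩ := pow_unbounded_of_one_lt ((C * T 2) / (δ * ε / r) / (δ^2)) hq
    rw [div_pow] at hj
    have hLj : 0 < (r*C)^j := by positivity
    rw [div_div, div_lt_div_iff₀ (by positivity) hLj] at hj
    -- hj : C * T 2 * (r*C)^j < (δ^2)^j * ((δ*ε/r) * δ^2)
    have h' : (r*C)^j * (C * T 2) < (δ^2)^(j+1) * (δ * ε / r) := by
      calc (r*C)^j * (C * T 2) = C * T 2 * (r*C)^j := by ring
      _ < (δ^2)^j * (δ * ε / r * δ^2) := hj
      _ = (δ^2)^(j+1) * (δ * ε / r) := by ring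
    exact absurd (key j) (not_le.mpr h')

private lemma aux_pyth {H : Type*} [NormedAddCommGroup H] [InnerProductSpace ℂ H]
    {n : ℕ} (v : Fin n → H) (ho : ∀ i j : Fin n, i ≠ j → ⟪v i, v j⟫_ℂ = 0) (k : Fin n) :
    ‖v k‖ ≤ ‖∑ j, v j‖ := by
  have hdiag : ⟪∑ i, v i, ∑ j, v j⟫_ℂ = ∑ i, ⟪v i, v i⟫_ℂ := by
    rw [sum_inner]
    refine Finset.sum_congr rfl fun i _ => ?_
    rw [inner_sum]
    exact Finset.sum_eq_single i (fun j _ hj => ho i j (Ne.symm hj))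
      (fun h => absurd (Finset.mem_univ i) h)
  have hsq : ‖∑ j, v j‖^2 = ∑ j, ‖v j‖^2 := by
    have h1 := inner_self_eq_norm_sq (𝕜 := ℂ) (∑ j, v j)
    rw [hdiag, map_sum] at h1
    rw [← h1]
    exact Finset.sum_congr rfl fun i _ => inner_self_eq_norm_sq (𝕜 := ℂ) (v i)
  have hle : ‖v k‖^2 ≤ ∑ j, ‖v j‖^2 :=
    Finset.single_le_sum (fun i _ => sq_nonneg ‖v i‖) (Finset.mem_univ k)
  nlinarith [norm_nonneg (v k), norm_nonneg (∑ j, v j), hsq, hle]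

end CStarAux

private lemma sq_le_real {a b : ℝ} (ha : 0 ≤ a) (hb : 0 ≤ b) (h : a^2 ≤ b^2) : a ≤ b := by
  nlinarith

private lemma sq_eq_real {a b : ℝ} (ha : 0 ≤ a) (hb : 0 ≤ b) (h : a^2 = b^2) : a = b := by
  nlinarith


/-- Let `A` be a C*-algebra with a faithful tracial state `τ`, realized on its GNS
Hilbert space `H`.  Suppose `B ⊆ A` is a C*-subalgebra and `u ∈ A` a unitary with
`uⁿ = 1` such that the closed subspaces `uᵏ·cl{b̂ : b ∈ B}`, `0 ≤ k ≤ n-1`, are pairwise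
orthogonal and together span `H`, and the linear span of `⋃ₖ uᵏ B` is dense in `A`.
Then every `a ∈ A` can be written uniquely as `a = ∑ₖ uᵏ bₖ` with `bₖ ∈ B`, i.e.
`A = ⊕ₖ uᵏ B` as a Banach space. -/
theorem banach_direct_sum_decomposition (A : Type*) [CStarAlgebra A]
    (τ : A →L[ℂ] ℂ) (hτ : IsTracialState τ)
    (hfaithful : ∀ a : A, τ (star a * a) = 0 → a = 0)
    (H : Type*) [NormedAddCommGroup H] [InnerProductSpace ℂ H] [CompleteSpace H]
    (hat : A →ₗ[ℂ] H) (hdense : closure (Set.range hat) = Set.univ)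
    (hinner : ∀ a b : A, ⟪hat a, hat b⟫_ℂ = τ (star b * a))
    (B : NonUnitalStarSubalgebra ℂ A) (hBclosed : IsClosed (B : Set A))
    (u : A) (hu : u * star u = 1 ∧ star u * u = 1)
    (n : ℕ) (hn : 1 ≤ n) (hun : u ^ n = 1)
    (horth : ∀ k₁ k₂ : ℕ, k₁ ≤ n - 1 → k₂ ≤ n - 1 → k₁ ≠ k₂ →
      ∀ x ∈ closure {v : H | ∃ b ∈ B, v = hat (u ^ k₁ * b)},
        ∀ y ∈ closure {v : H | ∃ b ∈ B, v = hat (u ^ k₂ * b)}, ⟪x, y⟫_ℂ = 0)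
    (hspanH : closure ((Submodule.span ℂ
      (⋃ k : Fin n, {v : H | ∃ b ∈ B, v = hat (u ^ (k : ℕ) * b)}) : Submodule ℂ H) :
        Set H) = Set.univ)
    (hdenseA : closure ((Submodule.span ℂ
      (⋃ k : Fin n, {x : A | ∃ b ∈ B, x = u ^ (k : ℕ) * b}) : Submodule ℂ A) :
        Set A) = Set.univ) :
    ∀ a : A, ∃! b : Fin n → B,
      a = ∑ k : Fin n, u ^ (k : ℕ) * (b k : A) := by
  letI : PartialOrder A := CStarAlgebra.spectralOrder A
  haveI : StarOrderedRing A := CStarAlgebra.spectralOrderedRing A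
  obtain ⟨hτ1, hτpos, hτim, hτtr⟩ := hτ
  have hfaithre : ∀ a : A, (τ (star a * a)).re = 0 → a = 0 := fun a ha =>
    hfaithful a (Complex.ext (by simpa using ha) (by simpa using hτim a))
  have hnormhat : ∀ y : A, ‖hat y‖^2 = (τ (star y * y)).re := by
    intro y
    have h2 := inner_self_eq_norm_sq (𝕜 := ℂ) (hat y)
    rw [hinner y y] at h2
    simpa using h2.symm
  have hatinj : ∀ y : A, hat y = 0 → y = 0 := by
    intro y hy
    apply hfaithre
    have h := hnormhat y
    rw [hy, norm_zero] at h
    simpa using h.symm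
  have hku : ∀ k : ℕ, star (u ^ k) * u ^ k = 1 := by
    intro k
    induction k with
    | zero => simp
    | succ k ih =>
      rw [pow_succ, star_mul, mul_assoc, ← mul_assoc (star (u ^ k)), ih, one_mul, hu.2]
  have hcancel : ∀ (k : ℕ) (y : A), star (u ^ k) * (u ^ k * y) = y := by
    intro k y; rw [← mul_assoc, hku, one_mul]
  have hstarself : ∀ (k : ℕ) (y : A), star (u ^ k * y) * (u ^ k * y) = star y * y := by
    intro k y
    rw [star_mul, mul_assoc, hcancel]
  have hatunorm : ∀ (k : ℕ) (y : A), ‖hat (u ^ k * y)‖ = ‖hat y‖ := by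
    intro k y
    have h1 := hnormhat (u ^ k * y)
    rw [hstarself, ← hnormhat y] at h1
    exact sq_eq_real (norm_nonneg _) (norm_nonneg _) h1
  have hmulest : ∀ x c : A, ‖hat (x * c)‖ ≤ ‖x‖ * ‖hat c‖ := by
    intro x c
    have e1 : star (x * c) * (x * c) = star c * (star x * x) * c := by
      rw [star_mul, mul_assoc, ← mul_assoc (star x) x c, ← mul_assoc]
    have hle : star x * x ≤ algebraMap ℝ A ‖star x * x‖ :=
      IsSelfAdjoint.le_algebraMap_norm_self (IsSelfAdjoint.star_mul_self x)
    have hconj := star_left_conjugate_le_conjugate hle c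
    have e2 : star c * algebraMap ℝ A ‖star x * x‖ * c = ‖star x * x‖ • (star c * c) := by
      rw [Algebra.algebraMap_eq_smul_one, mul_smul_comm, mul_one, smul_mul_assoc]
    rw [e2] at hconj
    have h3 := aux_tau_mono τ hτpos hconj
    rw [aux_smul_re] at h3
    have h4 : (τ (star (x * c) * (x * c))).re ≤ ‖x‖^2 * (τ (star c * c)).re := by
      rw [e1]
      calc (τ (star c * (star x * x) * c)).re ≤ ‖star x * x‖ * (τ (star c * c)).re := h3
      _ = ‖x‖^2 * (τ (star c * c)).re := by rw [CStarRing.norm_star_mul_self]; ring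
    apply sq_le_real (norm_nonneg _) (by positivity)
    rw [mul_pow, hnormhat, hnormhat]
    exact h4
  have hBpow : ∀ x : A, x ∈ B → ∀ m : ℕ, x ^ (m+1) ∈ B := by
    intro x hx m
    induction m with
    | zero => simpa using hx
    | succ m ih => rw [pow_succ]; exact mul_mem ih hx
  have hvorth : ∀ (g : Fin n → A), (∀ j, g j ∈ B) → ∀ i j : Fin n, i ≠ j →
      ⟪hat (u ^ (i : ℕ) * g i), hat (u ^ (j : ℕ) * g j)⟫_ℂ = 0 := by
    intro g hg i j hij
    refine horth i j (by have := i.isLt; omega) (by have := j.isLt; omega)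
      (fun h => hij (Fin.ext h)) _ (subset_closure ⟨g i, hg i, rfl⟩)
      _ (subset_closure ⟨g j, hg j, rfl⟩)
  -- the key component estimate
  have hest : ∀ (g : Fin n → A), (∀ j, g j ∈ B) → ∀ k : Fin n,
      ‖g k‖ ≤ ‖∑ j : Fin n, u ^ (j : ℕ) * g j‖ := by
    intro g hg k
    set s := ∑ j : Fin n, u ^ (j : ℕ) * g j with hsdef
    set b := g k with hbdef
    set x := star b * b with hxdef
    have hxB : x ∈ B := mul_mem (star_mem (hg k)) (hg k)
    have hx0 : 0 ≤ x := star_mul_self_nonneg b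
    have hxsa : star x = x := (IsSelfAdjoint.star_mul_self b).star_eq
    have hkey : ∀ m : ℕ, 1 ≤ m → (τ (x ^ (2*m+1))).re ≤ ‖s‖^2 * (τ (x ^ (2*m))).re := by
      intro m hm
      obtain ⟨m', rfl⟩ : ∃ m', m = m' + 1 := ⟨m - 1, by omega⟩
      set c := x ^ (m'+1) with hcdef
      have hcB : c ∈ B := hBpow x hxB m'
      have hxm : star c = c := by rw [hcdef, star_pow, hxsa]
      have e1 : star (b * c) * (b * c) = x ^ (2*(m'+1)+1) := by
        calc star (b * c) * (b * c) = star c * (star b * b * c) := by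
              rw [star_mul, mul_assoc, ← mul_assoc (star b) b c]
        _ = x ^ (m'+1) * (x * x ^ (m'+1)) := by rw [hxm, hcdef]
        _ = x ^ (m'+1) * x ^ (m'+1+1) := by rw [← pow_succ']
        _ = x ^ (2*(m'+1)+1) := by rw [← pow_add]; congr 1; omega
      have e2 : star c * c = x ^ (2*(m'+1)) := by
        rw [hxm, hcdef, ← pow_add]; congr 1; omega
      have h1 : ‖hat (b * c)‖ = ‖hat (u ^ (k : ℕ) * (b * c))‖ := (hatunorm _ _).symm
      have h2 : ‖hat (u ^ (k : ℕ) * (b * c))‖ ≤ ‖hat (s * c)‖ := by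
        have hsc : s * c = ∑ j : Fin n, u ^ (j : ℕ) * (g j * c) := by
          rw [hsdef, Finset.sum_mul]
          exact Finset.sum_congr rfl fun j _ => mul_assoc _ _ _
        have hv := aux_pyth (fun j : Fin n => hat (u ^ (j : ℕ) * (g j * c)))
          (fun i j hij => hvorth (fun j => g j * c) (fun j => mul_mem (hg j) hcB) i j hij) k
        rw [hsc, map_sum]
        exact hv
      have h3 : ‖hat (s * c)‖ ≤ ‖s‖ * ‖hat c‖ := hmulest s c
      have h4 : ‖hat (b * c)‖ ≤ ‖s‖ * ‖hat c‖ := by rw [h1]; exact le_trans h2 h3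
      have h5 : ‖hat (b * c)‖^2 ≤ ‖s‖^2 * ‖hat c‖^2 := by
        nlinarith [norm_nonneg (hat (b * c)), norm_nonneg (hat c), norm_nonneg s]
      calc (τ (x ^ (2*(m'+1)+1))).re = ‖hat (b * c)‖^2 := by rw [hnormhat, e1]
      _ ≤ ‖s‖^2 * ‖hat c‖^2 := h5
      _ = ‖s‖^2 * (τ (x ^ (2*(m'+1)))).re := by rw [hnormhat, e2]
    have hfin := aux_norm_le τ hτpos hfaithre x hx0 (‖s‖^2) (by positivity) hkey
    rw [hxdef, CStarRing.norm_star_mul_self] at hfin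
    nlinarith [norm_nonneg b, norm_nonneg s]
  -- the set of decomposable elements
  set R : Set A := {a | ∃ g : Fin n → A, (∀ j, g j ∈ B) ∧
    a = ∑ j : Fin n, u ^ (j : ℕ) * g j} with hRdef
  have hRclosed : IsClosed R := by
    apply IsSeqClosed.isClosed
    intro w a hw hwa
    choose g hgB hgsum using hw
    have hcauchy : ∀ k : Fin n, CauchySeq (fun m => g m k) := by
      intro k
      have hwc : CauchySeq w := hwa.cauchySeq
      rw [Metric.cauchySeq_iff] at hwc ⊢
      intro ε hε
      obtain ⟨N, hN⟩ := hwc ε hε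
      refine ⟨N, fun m hm m' hm' => ?_⟩
      have h1 := hest (fun j => g m j - g m' j)
        (fun j => sub_mem (hgB m j) (hgB m' j)) k
      rw [dist_eq_norm]
      calc ‖g m k - g m' k‖ ≤ ‖∑ j : Fin n, u ^ (j : ℕ) * (g m j - g m' j)‖ := h1
      _ = ‖w m - w m'‖ := by
          congr 1
          rw [hgsum m, hgsum m', ← Finset.sum_sub_distrib]
          exact Finset.sum_congr rfl fun j _ => mul_sub _ _ _
      _ = dist (w m) (w m') := (dist_eq_norm _ _).symm
      _ < ε := hN m hm m' hm'
    have hlim : ∀ k : Fin n, ∃ bk : A, bk ∈ B ∧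
        Filter.Tendsto (fun m => g m k) Filter.atTop (nhds bk) := by
      intro k
      obtain ⟨bk, hbk⟩ := cauchySeq_tendsto_of_complete (hcauchy k)
      exact ⟨bk, hBclosed.mem_of_tendsto hbk
        (Filter.Eventually.of_forall fun m => hgB m k), hbk⟩
    choose gb hgbB hgbt using hlim
    refine ⟨gb, hgbB, ?_⟩
    have ht : Filter.Tendsto w Filter.atTop
        (nhds (∑ j : Fin n, u ^ (j : ℕ) * gb j)) := by
      have h := tendsto_finset_sum (Finset.univ : Finset (Fin n))
        (fun j _ => (hgbt j).const_mul (u ^ (j : ℕ)))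
      exact h.congr (fun m => (hgsum m).symm)
    exact tendsto_nhds_unique hwa ht
  let Rsub : Submodule ℂ A :=
    { carrier := R
      add_mem' := by
        rintro a a' ⟨g, hgB, rfl⟩ ⟨g', hgB', rfl⟩
        refine ⟨fun j => g j + g' j, fun j => add_mem (hgB j) (hgB' j), ?_⟩
        rw [← Finset.sum_add_distrib]
        exact Finset.sum_congr rfl fun j _ => (mul_add _ _ _).symm
      zero_mem' := ⟨fun _ => 0, fun _ => zero_mem _, by simp⟩
      smul_mem' := by
        rintro c a ⟨g, hgB, rfl⟩
        refine ⟨fun j => c • g j, fun j => SMulMemClass.smul_mem c (hgB j), ?_⟩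
        rw [Finset.smul_sum]
        exact Finset.sum_congr rfl fun j _ => (mul_smul_comm _ _ _).symm }
  have hspan : Submodule.span ℂ
      (⋃ k : Fin n, {x : A | ∃ b ∈ B, x = u ^ (k : ℕ) * b}) ≤ Rsub := by
    rw [Submodule.span_le]
    intro y hy
    simp only [Set.mem_iUnion, Set.mem_setOf_eq] at hy
    obtain ⟨k, b, hbB, rfl⟩ := hy
    refine ⟨fun j => if j = k then b else 0,
      fun j => by by_cases h : j = k <;> simp [h, hbB, zero_mem], ?_⟩
    rw [Finset.sum_eq_single k (fun j _ hj => by simp [hj]) (fun h => absurd (Finset.mem_univ k) h)]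
    simp
  have haR : ∀ a : A, a ∈ R := by
    intro a
    have h1 : a ∈ closure (Rsub : Set A) := by
      have hsubset := closure_mono hspan
      rw [hdenseA] at hsubset
      exact hsubset trivial
    have h2 : (Rsub : Set A) = R := rfl
    rw [h2, hRclosed.closure_eq] at h1
    exact h1
  intro a
  obtain ⟨g, hgB, hgsum⟩ := haR a
  refine ⟨fun k => ⟨g k, hgB k⟩, hgsum, ?_⟩
  intro y hy
  funext k
  have hzero : ∑ j : Fin n, u ^ (j : ℕ) * ((y j : A) - g j) = 0 := by
    have heq : ∑ j : Fin n, u ^ (j : ℕ) * (y j : A)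
        = ∑ j : Fin n, u ^ (j : ℕ) * g j := by rw [← hy, ← hgsum]
    calc ∑ j : Fin n, u ^ (j : ℕ) * ((y j : A) - g j)
        = ∑ j : Fin n, (u ^ (j : ℕ) * (y j : A) - u ^ (j : ℕ) * g j) :=
          Finset.sum_congr rfl fun j _ => mul_sub _ _ _
    _ = ∑ j : Fin n, u ^ (j : ℕ) * (y j : A) - ∑ j : Fin n, u ^ (j : ℕ) * g j :=
          Finset.sum_sub_distrib _ _
    _ = 0 := by rw [heq, sub_self]
  have hterm : hat (u ^ (k : ℕ) * ((y k : A) - g k)) = 0 := by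
    have hd : ∀ i : Fin n, ((y i : A) - g i) ∈ B := fun i => sub_mem (y i).2 (hgB i)
    have hp := aux_pyth (fun i : Fin n => hat (u ^ (i : ℕ) * ((y i : A) - g i)))
      (fun i i' hii' => hvorth _ hd i i' hii') k
    rw [← map_sum, hzero, map_zero, norm_zero] at hp
    exact norm_le_zero_iff.mp hp
  have hsub0 : (y k : A) - g k = 0 := by
    have h0 := hatinj _ hterm
    have h1 : star (u ^ (k : ℕ)) * (u ^ (k : ℕ) * ((y k : A) - g k))
        = star (u ^ (k : ℕ)) * 0 := by rw [h0]
    rw [hcancel, mul_zero] at h1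
    exact h1
  exact Subtype.ext (by rwa [sub_eq_zero] at hsub0)
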